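/- arXiv:1011.2958 — 4 statements merged into one kernel-verified Lean document; each statement's English description precedes it below -/
import Mathlib

section
/- Let X ∈ L¹_𝒫 and let Y : [0,T]×Ω → ℝ be a process all of whose paths are càdlàg, adapted to F̂, such that for every t ∈ [0,T] and every P ∈ 𝒫, Y_t is a P-essential supremum of the family {E^{P'}[X|F̂_t] : P' ∈ 𝒫(F̂_t,P)}. Then: (a) (minimality) if S : [0,T]×Ω → ℝ is any process with all paths càdlàg, adapted to F̂, with S_T = X 𝒫-quasi-surely, such that S is an (F̂,P)-supermartingale for every P ∈ 𝒫, then outside a 𝒫-polar set one has S_t ≥ Y_t for all t ∈ [0,T]; (b) (uniqueness) if Y' is another process with all paths càdlàg, adapted to F̂, satisfying the same essential-supremum property, then outside a 𝒫-polar set Y'_t = Y_t for all t ∈ [0,T]. -/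
open MeasureTheory Set Filter

noncomputable section

/-- The canonical path space: continuous paths in `ℝ^d` starting at `0`
(paths indexed by `ℝ`; only the restriction to `[0,T]` is ever used). -/
def PathSpace (d : ℕ) : Type :=
  {ω : C(ℝ, EuclideanSpace ℝ (Fin d)) // ω 0 = 0}

/-- The raw σ-algebra `F°_t = σ(B_s ; 0 ≤ s ≤ t)` generated by the canonical process. -/
def rawSA (d : ℕ) (t : ℝ) : MeasurableSpace (PathSpace d) :=
  ⨆ s ∈ Set.Icc (0 : ℝ) t, MeasurableSpace.comap (fun ω : PathSpace d => ω.1 s) inferInstance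

lemma rawSA_mono {d : ℕ} : Monotone (rawSA d) := by
  intro s t hst
  refine iSup₂_le fun u hu => ?_
  exact le_iSup₂_of_le u ⟨hu.1, hu.2.trans hst⟩ le_rfl

/-- The raw filtration `F°`, as a filtration indexed by `ℝ` (constant after time `T`),
with ambient σ-algebra `F°_T`. -/
def rawFilt (T : ℝ) (d : ℕ) : Filtration ℝ (rawSA d T) where
  seq t := rawSA d (min t T)
  mono' := fun _ _ hst => rawSA_mono (min_le_min hst le_rfl)
  le' := fun t => rawSA_mono (min_le_right t T)

/-- A bounded function. -/
def BddFun {α : Type*} (f : α → ℝ) : Prop := ∃ C : ℝ, ∀ x, |f x| ≤ C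

/-- `Y` is a `P`-essential supremum of the family `F` of random variables. -/
def IsEssSupOf {α : Type*} {m0 : MeasurableSpace α} (P : @Measure α m0) (F : Set (α → ℝ))
    (Y : α → ℝ) : Prop :=
  (∀ f ∈ F, f ≤ᵐ[P] Y) ∧ ∀ Z : α → ℝ, (∀ f ∈ F, f ≤ᵐ[P] Z) → Y ≤ᵐ[P] Z

/-- Two measures agree on the σ-algebra `G`. -/
def EqOnSA {α : Type*} {m0 : MeasurableSpace α} (G : MeasurableSpace α)
    (P Q : @Measure α m0) : Prop :=
  ∀ A : Set α, MeasurableSet[G] A → P A = Q A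

/-- `𝔓(G, P) = {P' ∈ 𝔓 : P' = P on G}`. -/
def MSet {α : Type*} {m0 : MeasurableSpace α} (𝔓 : Set (@Measure α m0))
    (G : MeasurableSpace α) (P : @Measure α m0) : Set (@Measure α m0) :=
  {Q ∈ 𝔓 | EqOnSA G Q P}

/-- The family `{E^{P'}[X | G] : P' ∈ 𝔓(G, P)}` of conditional expectations. -/
def condExpFam {α : Type*} {m0 : MeasurableSpace α} (𝔓 : Set (@Measure α m0))
    (G : MeasurableSpace α) (P : @Measure α m0) (X : α → ℝ) : Set (α → ℝ) :=
  {g | ∃ Q ∈ MSet 𝔓 G P, g = condExp G Q X}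

/-- `X ∈ L¹_𝔓` : `mT`-measurable with `sup_{P ∈ 𝔓} E^P[|X|] < ∞`. -/
def MemL1 {α : Type*} {m0 : MeasurableSpace α} (mT : MeasurableSpace α)
    (𝔓 : Set (@Measure α m0)) (X : α → ℝ) : Prop :=
  Measurable[mT] X ∧ (∀ P ∈ 𝔓, Integrable X P) ∧ ∃ M : ℝ, ∀ P ∈ 𝔓, ∫ ω, |X ω| ∂P ≤ M

/-- `Pb` is the pasting of `(P₁, P₂)` over `(Λ, G)` under `P`, characterized through
integrals of bounded measurable functions. -/
def IsPastingOf {α : Type*} {m0 : MeasurableSpace α} (mT : MeasurableSpace α)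
    (G : MeasurableSpace α) (P P₁ P₂ Pb : @Measure α m0) (Λ : Set α) : Prop :=
  ∀ h : α → ℝ, Measurable[mT] h → BddFun h →
    ∫ x, h x ∂Pb
      = ∫ x, (Λ.indicator (condExp G P₁ h) x + Λᶜ.indicator (condExp G P₂ h) x) ∂P

/-- `𝔓` is stable under `F°`-pasting (along finite-valued `F°`-stopping times). -/
def StableUnderPasting (T : ℝ) (d : ℕ)
    (𝔓 : Set (@Measure (PathSpace d) (rawSA d T))) : Prop :=
  ∀ P ∈ 𝔓, ∀ τ : PathSpace d → ℝ, ∀ hτ : IsStoppingTime (rawFilt T d) (fun ω => (τ ω : WithTop ℝ)),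
    (Set.range τ).Finite → (∀ ω, τ ω ∈ Set.Icc (0 : ℝ) T) →
    ∀ Λ : Set (PathSpace d), MeasurableSet[hτ.measurableSpace] Λ →
    ∀ P₁ ∈ MSet 𝔓 hτ.measurableSpace P, ∀ P₂ ∈ MSet 𝔓 hτ.measurableSpace P,
    ∀ Pb : @Measure (PathSpace d) (rawSA d T),
      IsPastingOf (rawSA d T) hτ.measurableSpace P P₁ P₂ Pb Λ → Pb ∈ 𝔓


/-- The right-continuous filtration `F⁺`: `F⁺_t = ∩_{s ∈ (t,T]} F°_s` for `t < T`
and `F⁺_T = F°_T` (realized as `⨅_{s > t} F°_{min s T}`). -/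
def FplusSA (T : ℝ) (d : ℕ) (t : ℝ) : MeasurableSpace (PathSpace d) :=
  ⨅ s ∈ Set.Ioi t, rawSA d (min s T)

lemma FplusSA_mono (T : ℝ) (d : ℕ) : Monotone (FplusSA T d) := by
  intro s t hst
  exact le_iInf₂ fun u hu => iInf₂_le u (lt_of_le_of_lt hst hu)

lemma FplusSA_le (T : ℝ) (d : ℕ) (t : ℝ) : FplusSA T d t ≤ rawSA d T := by
  have h1 : (max t T + 1) ∈ Set.Ioi t := by
    simp only [Set.mem_Ioi]
    have := le_max_left t T
    linarith
  have h2 : min (max t T + 1) T = T := by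
    have := le_max_right t T
    exact min_eq_right (by linarith)
  have := iInf₂_le (f := fun (s : ℝ) (_ : s ∈ Set.Ioi t) => rawSA d (min s T)) (max t T + 1) h1
  rwa [h2] at this

/-- The collection of `𝔓`-polar sets. -/
def IsPolar {α : Type*} {m0 : MeasurableSpace α} (𝔓 : Set (@Measure α m0)) (N : Set α) : Prop :=
  ∀ P ∈ 𝔓, P N = 0

/-- The augmented σ-algebra `F̂_t = σ(F⁺_t ∪ N^𝔓)`. -/
def FhatSA (T : ℝ) (d : ℕ) {m0 : MeasurableSpace (PathSpace d)}
    (𝔓 : Set (@Measure (PathSpace d) m0)) (t : ℝ) : MeasurableSpace (PathSpace d) :=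
  FplusSA T d t ⊔ MeasurableSpace.generateFrom {N | IsPolar 𝔓 N}

/-- The filtration `F̂`, with an ambient σ-algebra `m0` containing `F°_T` and the polar sets
(the measures of `𝔓` being understood as (uniquely) extended to `m0`). -/
def FhatFilt (T : ℝ) (d : ℕ) {m0 : MeasurableSpace (PathSpace d)}
    (𝔓 : Set (@Measure (PathSpace d) m0))
    (hB : rawSA d T ≤ m0)
    (hN : MeasurableSpace.generateFrom {N | IsPolar 𝔓 N} ≤ m0) :
    Filtration ℝ m0 where
  seq t := FhatSA T d 𝔓 t
  mono' := fun _ _ hst => sup_le_sup_right (FplusSA_mono T d hst) _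
  le' := fun t => sup_le ((FplusSA_le T d t).trans hB) hN

/-- The augmentation hypothesis for `P`: every set in `F̂_t` agrees with a set in `F°_t`
up to a `P`-null set, for every `t ∈ [0,T]`. -/
def AugHyp (T : ℝ) (d : ℕ) {m0 : MeasurableSpace (PathSpace d)}
    (𝔓 : Set (@Measure (PathSpace d) m0)) (P : @Measure (PathSpace d) m0) : Prop :=
  ∀ t ∈ Set.Icc (0 : ℝ) T, ∀ A : Set (PathSpace d), MeasurableSet[FhatSA T d 𝔓 t] A →
    ∃ A' : Set (PathSpace d), MeasurableSet[rawSA d t] A' ∧ P (symmDiff A A') = 0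

/-- Stability of `𝔓` under `F°`-pasting, for measures given on the ambient σ-algebra `m0`:
the pasting, which is a measure on `F°_T`, coincides on `F°_T` with an element of `𝔓`. -/
def StableUnderPastingE (T : ℝ) (d : ℕ) {m0 : MeasurableSpace (PathSpace d)}
    (𝔓 : Set (@Measure (PathSpace d) m0)) : Prop :=
  ∀ P ∈ 𝔓, ∀ τ : PathSpace d → ℝ, ∀ hτ : IsStoppingTime (rawFilt T d) (fun ω => (τ ω : WithTop ℝ)),
    (Set.range τ).Finite → (∀ ω, τ ω ∈ Set.Icc (0 : ℝ) T) →
    ∀ Λ : Set (PathSpace d), MeasurableSet[hτ.measurableSpace] Λ →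
    ∀ P₁ ∈ MSet 𝔓 hτ.measurableSpace P, ∀ P₂ ∈ MSet 𝔓 hτ.measurableSpace P,
    ∃ Q ∈ 𝔓, ∀ h : PathSpace d → ℝ, Measurable[rawSA d T] h → BddFun h →
      ∫ x, h x ∂Q
        = ∫ x, (Λ.indicator (condExp hτ.measurableSpace P₁ h) x
            + Λᶜ.indicator (condExp hτ.measurableSpace P₂ h) x) ∂P

/-- A real path which is càdlàg on `[0,T]`: right-continuous on `[0,T)` and with finite
left limits on `(0,T]`. -/
def IsCadlagPath (T : ℝ) (f : ℝ → ℝ) : Prop :=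
  (∀ t ∈ Set.Ico (0 : ℝ) T, Tendsto f (nhdsWithin t (Set.Ioi t)) (nhds (f t))) ∧
  (∀ t ∈ Set.Ioc (0 : ℝ) T, ∃ L : ℝ, Tendsto f (nhdsWithin t (Set.Ico 0 t)) (nhds L))

end

/-! For fixed `t` and `P ∈ 𝔓` both claims hold `P`-a.s. A supermartingale `S` with `S_T = X`
dominates `E^{P'}[X | F̂_t]` `P'`-a.s.; the exceptional set lies in `F̂_t`, where `P' = P`, so
the domination also holds `P`-a.s. and `S_t` dominates the essential supremum `Y_t`. Two
essential suprema dominate each other. Right-continuity of the paths then turns the countably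
many a.s. comparisons at rational times and at `T` into one polar exceptional set. -/

open Topology

theorem le_of_forall_rat_le_of_continuousWithinAt_Ioi {f g : ℝ → ℝ} {t b : ℝ} (htb : t < b)
    (hf : ContinuousWithinAt f (Ioi t) t) (hg : ContinuousWithinAt g (Ioi t) t)
    (h : ∀ q : ℚ, (q : ℝ) ∈ Ioo t b → f q ≤ g q) : f t ≤ g t := by
  set s := Ioo t b ∩ range ((↑) : ℚ → ℝ)
  have ht : t ∈ closure s := by
    have := closure_mono <|
      Rat.denseRange_cast.open_subset_closure_inter (isOpen_Ioo (a := t) (b := b))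
    rw [closure_closure, closure_Ioo htb.ne] at this
    exact this (left_mem_Icc.mpr htb.le)
  have : (𝓝[s] t).NeBot := mem_closure_iff_nhdsWithin_neBot.mp ht
  have hst : s ⊆ Ioi t := fun x hx => hx.1.1
  refine le_of_tendsto_of_tendsto (hf.mono hst).tendsto (hg.mono hst).tendsto <|
    eventually_nhdsWithin_of_forall ?_
  rintro _ ⟨hx, q, rfl⟩
  exact h q hx

theorem exists_isPolar_forall_le_of_continuousWithinAt_Ioi {α : Type*} {m0 : MeasurableSpace α}
    {T : ℝ} (𝔓 : Set (@Measure α m0)) (U V : ℝ → α → ℝ)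
    (hU : ∀ ω, ∀ t ∈ Ico (0 : ℝ) T, ContinuousWithinAt (U · ω) (Ioi t) t)
    (hV : ∀ ω, ∀ t ∈ Ico (0 : ℝ) T, ContinuousWithinAt (V · ω) (Ioi t) t)
    (h : ∀ t ∈ Icc (0 : ℝ) T, ∀ P ∈ 𝔓, U t ≤ᵐ[P] V t) :
    ∃ N : Set α, IsPolar 𝔓 N ∧ ∀ ω ∉ N, ∀ t ∈ Icc (0 : ℝ) T, U t ω ≤ V t ω := by
  set D := Icc (0 : ℝ) T ∩ insert T (range ((↑) : ℚ → ℝ))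
  have hD : D.Countable := ((countable_range _).insert T).mono inter_subset_right
  refine ⟨⋃ t ∈ D, {ω | ¬ U t ω ≤ V t ω}, fun P hP => ?_, fun ω hω t ht => ?_⟩
  · exact (measure_biUnion_null_iff hD).mpr fun t ht => ae_iff.mp (h t ht.1 P hP)
  have hωD : ∀ s ∈ D, U s ω ≤ V s ω := by
    simpa only [mem_iUnion, mem_ofPred_eq, not_exists, not_not] using hω
  rcases ht.2.eq_or_lt with rfl | htT
  · exact hωD t ⟨ht, mem_insert _ _⟩
  refine le_of_forall_rat_le_of_continuousWithinAt_Ioi htT (hU ω t ⟨ht.1, htT⟩)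
    (hV ω t ⟨ht.1, htT⟩) fun q hq => hωD q ⟨⟨ht.1.trans hq.1.le, hq.2.le⟩, ?_⟩
  exact mem_insert_of_mem _ ⟨q, rfl⟩

theorem EqOnSA.ae_le {α : Type*} {m0 : MeasurableSpace α} {G : MeasurableSpace α}
    {P Q : @Measure α m0} (hQP : EqOnSA G Q P) {f g : α → ℝ} (hf : Measurable[G] f)
    (hg : Measurable[G] g) (h : f ≤ᵐ[Q] g) : f ≤ᵐ[P] g := by
  have hmeas : MeasurableSet[G] {ω | g ω < f ω} := @measurableSet_lt _ _ _ _ _ G _ _ _ _ _ hg hf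
  rw [EventuallyLE, ae_iff] at h ⊢
  simpa only [not_le, hQP _ hmeas] using h

theorem forall_mem_condExpFam_ae_le {α : Type*} {m0 : MeasurableSpace α}
    {𝔓 : Set (@Measure α m0)} {G : MeasurableSpace α} {P : @Measure α m0} {X Z : α → ℝ}
    (hZ : Measurable[G] Z) (h : ∀ Q ∈ 𝔓, condExp G Q X ≤ᵐ[Q] Z) :
    ∀ f ∈ condExpFam 𝔓 G P X, f ≤ᵐ[P] Z := by
  rintro _ ⟨Q, ⟨hQ, hQP⟩, rfl⟩
  exact hQP.ae_le stronglyMeasurable_condExp.measurable hZ (h Q hQ)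

theorem statement8_general {T : ℝ} {d : ℕ}
    {m0 : MeasurableSpace (PathSpace d)}
    (𝔓 : Set (@Measure (PathSpace d) m0))
    (X : PathSpace d → ℝ)
    -- `Y` : càdlàg, `F̂`-adapted, essential-supremum property at every `t ∈ [0,T]`
    (Y : ℝ → PathSpace d → ℝ)
    (hYpath : ∀ ω, IsCadlagPath T (fun t => Y t ω))
    (hYess : ∀ t ∈ Set.Icc (0 : ℝ) T, ∀ P ∈ 𝔓,
      IsEssSupOf P (condExpFam 𝔓 (FhatSA T d 𝔓 t) P X) (Y t)) :
    -- (a) minimality among càdlàg `(F̂,𝔓)`-supermartingales with terminal value `X`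
    (∀ S : ℝ → PathSpace d → ℝ,
      (∀ ω, IsCadlagPath T (fun t => S t ω)) →
      (∀ t ∈ Set.Icc (0 : ℝ) T, Measurable[FhatSA T d 𝔓 t] (S t)) →
      IsPolar 𝔓 {ω | S T ω ≠ X ω} →
      (∀ P ∈ 𝔓, ∀ s t : ℝ, 0 ≤ s → s ≤ t → t ≤ T →
        Integrable (S t) P ∧ condExp (FhatSA T d 𝔓 s) P (S t) ≤ᵐ[P] S s) →
      ∃ N : Set (PathSpace d), IsPolar 𝔓 N ∧
        ∀ ω ∉ N, ∀ t ∈ Set.Icc (0 : ℝ) T, Y t ω ≤ S t ω) ∧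
    -- (b) uniqueness up to a polar set
    (∀ Y' : ℝ → PathSpace d → ℝ,
      (∀ ω, IsCadlagPath T (fun t => Y' t ω)) →
      (∀ t ∈ Set.Icc (0 : ℝ) T, Measurable[FhatSA T d 𝔓 t] (Y' t)) →
      (∀ t ∈ Set.Icc (0 : ℝ) T, ∀ P ∈ 𝔓,
        IsEssSupOf P (condExpFam 𝔓 (FhatSA T d 𝔓 t) P X) (Y' t)) →
      ∃ N : Set (PathSpace d), IsPolar 𝔓 N ∧
        ∀ ω ∉ N, ∀ t ∈ Set.Icc (0 : ℝ) T, Y' t ω = Y t ω) := by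
  refine ⟨fun S hSpath hSadp hST hSsuper => ?_, fun Y' hY'path _ hY'ess => ?_⟩
  · refine exists_isPolar_forall_le_of_continuousWithinAt_Ioi 𝔓 Y S (fun ω => (hYpath ω).1)
      (fun ω => (hSpath ω).1) fun t ht P hP => (hYess t ht P hP).2 (S t) ?_
    refine forall_mem_condExpFam_ae_le (hSadp t ht) fun Q hQ => ?_
    have hSX : S T =ᵐ[Q] X := ae_iff.mpr (hST Q hQ)
    exact (condExp_congr_ae hSX.symm).trans_le (hSsuper Q hQ t T ht.1 ht.2 le_rfl).2
  · obtain ⟨N₁, hN₁, hY'Y⟩ := exists_isPolar_forall_le_of_continuousWithinAt_Ioi 𝔓 Y' Y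
      (fun ω => (hY'path ω).1) (fun ω => (hYpath ω).1)
      fun t ht P hP => (hY'ess t ht P hP).2 (Y t) (hYess t ht P hP).1
    obtain ⟨N₂, hN₂, hYY'⟩ := exists_isPolar_forall_le_of_continuousWithinAt_Ioi 𝔓 Y Y'
      (fun ω => (hYpath ω).1) (fun ω => (hY'path ω).1)
      fun t ht P hP => (hYess t ht P hP).2 (Y' t) (hY'ess t ht P hP).1
    refine ⟨N₁ ∪ N₂, fun P hP => measure_union_null (hN₁ P hP) (hN₂ P hP),
      fun ω hω t ht => ?_⟩
    rw [mem_union, not_or] at hω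
    exact le_antisymm (hY'Y ω hω.1 t ht) (hYY' ω hω.2 t ht)

/-- minimality and uniqueness of the càdlàg `E`-martingale. -/
theorem statement8 {T : ℝ} (hT : 0 < T) {d : ℕ}
    {m0 : MeasurableSpace (PathSpace d)}
    (𝔓 : Set (@Measure (PathSpace d) m0)) (h𝔓 : 𝔓.Nonempty)
    (hprob : ∀ P ∈ 𝔓, IsProbabilityMeasure P)
    (hB : rawSA d T ≤ m0)
    (hN : MeasurableSpace.generateFrom {N | IsPolar 𝔓 N} ≤ m0)
    (X : PathSpace d → ℝ) (hX : MemL1 (rawSA d T) 𝔓 X)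
    -- `Y` : càdlàg, `F̂`-adapted, essential-supremum property at every `t ∈ [0,T]`
    (Y : ℝ → PathSpace d → ℝ)
    (hYpath : ∀ ω, IsCadlagPath T (fun t => Y t ω))
    (hYadp : ∀ t ∈ Set.Icc (0 : ℝ) T, Measurable[FhatSA T d 𝔓 t] (Y t))
    (hYess : ∀ t ∈ Set.Icc (0 : ℝ) T, ∀ P ∈ 𝔓,
      IsEssSupOf P (condExpFam 𝔓 (FhatSA T d 𝔓 t) P X) (Y t)) :
    -- (a) minimality among càdlàg `(F̂,𝔓)`-supermartingales with terminal value `X`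
    (∀ S : ℝ → PathSpace d → ℝ,
      (∀ ω, IsCadlagPath T (fun t => S t ω)) →
      (∀ t ∈ Set.Icc (0 : ℝ) T, Measurable[FhatSA T d 𝔓 t] (S t)) →
      IsPolar 𝔓 {ω | S T ω ≠ X ω} →
      (∀ P ∈ 𝔓, ∀ s t : ℝ, 0 ≤ s → s ≤ t → t ≤ T →
        Integrable (S t) P ∧ condExp (FhatSA T d 𝔓 s) P (S t) ≤ᵐ[P] S s) →
      ∃ N : Set (PathSpace d), IsPolar 𝔓 N ∧
        ∀ ω ∉ N, ∀ t ∈ Set.Icc (0 : ℝ) T, Y t ω ≤ S t ω) ∧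
    -- (b) uniqueness up to a polar set
    (∀ Y' : ℝ → PathSpace d → ℝ,
      (∀ ω, IsCadlagPath T (fun t => Y' t ω)) →
      (∀ t ∈ Set.Icc (0 : ℝ) T, Measurable[FhatSA T d 𝔓 t] (Y' t)) →
      (∀ t ∈ Set.Icc (0 : ℝ) T, ∀ P ∈ 𝔓,
        IsEssSupOf P (condExpFam 𝔓 (FhatSA T d 𝔓 t) P X) (Y' t)) →
      ∃ N : Set (PathSpace d), IsPolar 𝔓 N ∧
        ∀ ω ∉ N, ∀ t ∈ Set.Icc (0 : ℝ) T, Y' t ω = Y t ω) :=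
  statement8_general 𝔓 X Y hYpath hYess
end

section
/- Let p ∈ (1,∞) and let X be F°_T-measurable with sup_{P∈𝒫} E^P[|X|^p] < ∞. Let Y and W be processes on [0,T]×Ω, all paths càdlàg, adapted to F̂, such that for every F̂-stopping time σ with values in [0,T] and every P ∈ 𝒫: Y_σ is a P-essential supremum of {E^{P'}[X|F̂_σ] : P' ∈ 𝒫(F̂_σ,P)} and there is a sequence (Pₙ) in 𝒫(F̂_σ,P) with E^{Pₙ}[X|F̂_σ] P-a.s. nondecreasing and converging P-a.s. to Y_σ; and likewise W_σ is a P-essential supremum of {E^{P'}[|X|^p|F̂_σ] : P' ∈ 𝒫(F̂_σ,P)} attained as a P-a.s. nondecreasing limit along some sequence in 𝒫(F̂_σ,P). Then for every F̂-stopping time σ and every P ∈ 𝒫, E^P[|Y_σ|^p] ≤ sup_{P'∈𝒫} E^{P'}[|X|^p]; in particular, the family {Y_σ : σ an F̂-stopping time} is uniformly integrable under every P ∈ 𝒫, i.e., Y is of class (D,𝒫). -/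
open MeasureTheory Set Filter

/-!
Conditional Jensen gives `|E^{P'}[X | F̂_σ]|^p ≤ E^{P'}[|X|^p | F̂_σ] ≤ W_σ` for every
`P' ∈ 𝔓(F̂_σ, P)`, and the inequality passes from `P'` to `P` because both sides are
`F̂_σ`-measurable; letting `P'` run through the sequence attaining `Y_σ` gives `|Y_σ|^p ≤ W_σ`.
Along the sequence attaining `W_σ`, Fatou's lemma and `E^P[E^{P'}[|X|^p | F̂_σ]] ≤ E^{P'}[|X|^p]`
bound `E^P[W_σ]` by `sup_{P'} E^{P'}[|X|^p]`. Uniform integrability follows from this uniform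
`p`-th moment bound, since `|y| ≤ |y|^p / K^(p-1)` on `{|y| ≥ K}`.
-/

section EssSupMoments

variable {α : Type*} {G m0 : MeasurableSpace α} {P Q : Measure[m0] α}
  {𝔓 : Set (Measure[m0] α)} {p : ℝ} {X Y W : α → ℝ}

lemma trim_eq_of_eqOnSA (hG : G ≤ m0) (h : EqOnSA G Q P) : Q.trim hG = P.trim hG :=
  @Measure.ext _ G _ _ fun A hA => by
    rw [trim_measurableSet_eq hG hA, trim_measurableSet_eq hG hA, h A hA]

lemma ae_le_of_eqOnSA (hG : G ≤ m0) (h : EqOnSA G Q P) {f g : α → ℝ}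
    (hf : StronglyMeasurable[G] f) (hg : StronglyMeasurable[G] g) (hfg : f ≤ᵐ[Q] g) :
    f ≤ᵐ[P] g := by
  rwa [← StronglyMeasurable.ae_le_trim_iff hG hf hg, ← trim_eq_of_eqOnSA hG h,
    StronglyMeasurable.ae_le_trim_iff hG hf hg]

lemma abs_condExp_rpow_le_of_eqOnSA (hG : G ≤ m0) (h : EqOnSA G Q P) (hp : 1 ≤ p)
    (hX : Integrable (fun ω => |X ω| ^ p) Q) :
    (fun ω => |Q[X|G] ω| ^ p) ≤ᵐ[P] Q[fun ω => |X ω| ^ p|G] := by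
  have hm : StronglyMeasurable[G] fun ω => |Q[X|G] ω| ^ p := by
    have : StronglyMeasurable[G] Q[X|G] := stronglyMeasurable_condExp
    fun_prop
  exact ae_le_of_eqOnSA hG h hm stronglyMeasurable_condExp
    (Integrable.norm_condExp_rpow_le (m := G) (f := X) hp hX)

lemma lintegral_ofReal_condExp_le (hG : G ≤ m0) (h : EqOnSA G Q P) {f : α → ℝ}
    (hf : 0 ≤ᵐ[Q] f) :
    ∫⁻ ω, ENNReal.ofReal (Q[f|G] ω) ∂P ≤ ENNReal.ofReal (∫ ω, f ω ∂Q) := by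
  have hm : Measurable[G] fun ω => ENNReal.ofReal (Q[f|G] ω) :=
    ENNReal.measurable_ofReal.comp stronglyMeasurable_condExp.measurable
  calc ∫⁻ ω, ENNReal.ofReal (Q[f|G] ω) ∂P = ∫⁻ ω, ENNReal.ofReal (Q[f|G] ω) ∂Q := by
        rw [← lintegral_trim hG hm, ← trim_eq_of_eqOnSA hG h, lintegral_trim hG hm]
    _ = ENNReal.ofReal (∫ ω, Q[f|G] ω ∂Q) :=
        (ofReal_integral_eq_lintegral_ofReal integrable_condExp (condExp_nonneg hf)).symm
    _ ≤ ENNReal.ofReal (∫ ω, f ω ∂Q) :=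
        ENNReal.ofReal_le_ofReal (integral_condExp_le_of_ae_nonneg hf)

lemma lintegral_ofReal_le_of_tendsto {g : ℕ → α → ℝ} {c : ENNReal}
    (hg : ∀ n, AEMeasurable (g n) P)
    (hW : ∀ᵐ ω ∂P, Tendsto (fun n => g n ω) atTop (nhds (W ω)))
    (hc : ∀ n, ∫⁻ ω, ENNReal.ofReal (g n ω) ∂P ≤ c) :
    ∫⁻ ω, ENNReal.ofReal (W ω) ∂P ≤ c :=
  calc ∫⁻ ω, ENNReal.ofReal (W ω) ∂P
      = ∫⁻ ω, liminf (fun n => ENNReal.ofReal (g n ω)) atTop ∂P :=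
        lintegral_congr_ae (hW.mono fun _ hω => (ENNReal.tendsto_ofReal hω).liminf_eq.symm)
    _ ≤ liminf (fun n => ∫⁻ ω, ENNReal.ofReal (g n ω) ∂P) atTop :=
        lintegral_liminf_le' fun n => ENNReal.measurable_ofReal.comp_aemeasurable (hg n)
    _ ≤ c := liminf_le_of_frequently_le' (Frequently.of_forall hc)

lemma ae_comp_le_of_tendsto {φ : ℝ → ℝ} (hφ : Continuous φ) {g : ℕ → α → ℝ}
    (hY : ∀ᵐ ω ∂P, Tendsto (fun n => g n ω) atTop (nhds (Y ω)))
    (hgW : ∀ n, (fun ω => φ (g n ω)) ≤ᵐ[P] W) :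
    (fun ω => φ (Y ω)) ≤ᵐ[P] W := by
  filter_upwards [hY, ae_all_iff.mpr hgW] with ω hω hle
  exact le_of_tendsto' ((hφ.tendsto _).comp hω) hle

lemma aemeasurable_of_tendsto_condExp (hG : G ≤ m0) {Pn : ℕ → Measure[m0] α}
    (hY : ∀ᵐ ω ∂P, Tendsto (fun n => (Pn n)[X|G] ω) atTop (nhds (Y ω))) : AEMeasurable Y P :=
  aemeasurable_of_tendsto_metrizable_ae' (fun _ =>
    (stronglyMeasurable_condExp.measurable.mono hG le_rfl).aemeasurable) hY

lemma lintegral_rpow_abs_le_of_isEssSupOf (hG : G ≤ m0) (hp : 1 ≤ p)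
    (hX : ∀ Q ∈ 𝔓, Integrable (fun ω => |X ω| ^ p) Q) {M : ℝ}
    (hM : ∀ Q ∈ 𝔓, ∫ ω, |X ω| ^ p ∂Q ≤ M)
    (hW : IsEssSupOf P (condExpFam 𝔓 G P fun ω => |X ω| ^ p) W)
    {Pn Qn : ℕ → Measure[m0] α} (hPn : ∀ n, Pn n ∈ MSet 𝔓 G P) (hQn : ∀ n, Qn n ∈ MSet 𝔓 G P)
    (hYlim : ∀ᵐ ω ∂P, Tendsto (fun n => (Pn n)[X|G] ω) atTop (nhds (Y ω)))
    (hWlim : ∀ᵐ ω ∂P, Tendsto (fun n => (Qn n)[fun ω' => |X ω'| ^ p|G] ω) atTop (nhds (W ω))) :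
    ∫⁻ ω, ENNReal.ofReal (|Y ω| ^ p) ∂P ≤ ENNReal.ofReal M := by
  have hYW : (fun ω => |Y ω| ^ p) ≤ᵐ[P] W :=
    ae_comp_le_of_tendsto (continuous_abs.rpow_const fun _ => Or.inr (zero_le_one.trans hp))
      hYlim fun n => (abs_condExp_rpow_le_of_eqOnSA hG (hPn n).2 hp (hX _ (hPn n).1)).trans
        (hW.1 _ ⟨Pn n, hPn n, rfl⟩)
  have hWM : ∫⁻ ω, ENNReal.ofReal (W ω) ∂P ≤ ENNReal.ofReal M :=
    lintegral_ofReal_le_of_tendsto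
      (fun _ => (stronglyMeasurable_condExp.measurable.mono hG le_rfl).aemeasurable) hWlim
      fun n => (lintegral_ofReal_condExp_le hG (hQn n).2 (ae_of_all _ fun _ => by positivity)).trans
        (ENNReal.ofReal_le_ofReal (hM _ (hQn n).1))
  exact (lintegral_mono_ae (hYW.mono fun _ h => ENNReal.ofReal_le_ofReal h)).trans hWM

lemma integrable_rpow_abs_and_integral_le_of_isEssSupOf (hG : G ≤ m0) (hp : 1 ≤ p)
    (hP : P ∈ 𝔓) (hX : ∀ Q ∈ 𝔓, Integrable (fun ω => |X ω| ^ p) Q)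
    (hXM : ∃ M : ℝ, ∀ Q ∈ 𝔓, ∫ ω, |X ω| ^ p ∂Q ≤ M)
    (hW : IsEssSupOf P (condExpFam 𝔓 G P fun ω => |X ω| ^ p) W)
    {Pn Qn : ℕ → Measure[m0] α} (hPn : ∀ n, Pn n ∈ MSet 𝔓 G P) (hQn : ∀ n, Qn n ∈ MSet 𝔓 G P)
    (hYlim : ∀ᵐ ω ∂P, Tendsto (fun n => (Pn n)[X|G] ω) atTop (nhds (Y ω)))
    (hWlim : ∀ᵐ ω ∂P, Tendsto (fun n => (Qn n)[fun ω' => |X ω'| ^ p|G] ω) atTop (nhds (W ω))) :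
    Integrable (fun ω => |Y ω| ^ p) P ∧
      ∀ M : ℝ, (∀ Q ∈ 𝔓, ∫ ω, |X ω| ^ p ∂Q ≤ M) → ∫ ω, |Y ω| ^ p ∂P ≤ M := by
  have hmeas : AEStronglyMeasurable (fun ω => |Y ω| ^ p) P :=
    ((aemeasurable_of_tendsto_condExp hG hYlim).abs.pow_const p).aestronglyMeasurable
  have hnonneg : 0 ≤ᵐ[P] fun ω => |Y ω| ^ p := ae_of_all _ fun _ => by positivity
  have hbound (M : ℝ) (hM : ∀ Q ∈ 𝔓, ∫ ω, |X ω| ^ p ∂Q ≤ M) :=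
    lintegral_rpow_abs_le_of_isEssSupOf hG hp hX hM hW hPn hQn hYlim hWlim
  obtain ⟨M, hM⟩ := hXM
  refine ⟨⟨hmeas, (hasFiniteIntegral_iff_ofReal hnonneg).2
    ((hbound M hM).trans_lt ENNReal.ofReal_lt_top)⟩, fun M hM => ?_⟩
  rw [integral_eq_lintegral_of_nonneg_ae hnonneg hmeas]
  exact ENNReal.toReal_le_of_le_ofReal
    ((integral_nonneg fun _ => by positivity).trans (hM P hP)) (hbound M hM)

end EssSupMoments

section UniformIntegrability

variable {α : Type*} {m0 : MeasurableSpace α} {P : Measure[m0] α}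

lemma le_rpow_div_rpow_sub_one {x K p : ℝ} (hK : 0 < K) (hKx : K ≤ x) (hp : 1 ≤ p) :
    x ≤ x ^ p / K ^ (p - 1) := by
  have hx : 0 < x := hK.trans_le hKx
  rw [le_div_iff₀ (Real.rpow_pos_of_pos hK _)]
  calc x * K ^ (p - 1) ≤ x * x ^ (p - 1) :=
        mul_le_mul_of_nonneg_left (Real.rpow_le_rpow hK.le hKx (by linarith)) hx.le
    _ = x ^ p := by rw [mul_comm, ← Real.rpow_add_one hx.ne', sub_add_cancel]

lemma setIntegral_abs_ge_le {p K : ℝ} (hp : 1 ≤ p) (hK : 0 < K) {f : α → ℝ}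
    (hf : AEMeasurable f P) (hfp : Integrable (fun ω => |f ω| ^ p) P) :
    ∫ ω in {ω | K ≤ |f ω|}, |f ω| ∂P ≤ (∫ ω, |f ω| ^ p ∂P) / K ^ (p - 1) := by
  have hs : NullMeasurableSet {ω | K ≤ |f ω|} P := nullMeasurableSet_le aemeasurable_const hf.abs
  calc ∫ ω in {ω | K ≤ |f ω|}, |f ω| ∂P
      ≤ ∫ ω in {ω | K ≤ |f ω|}, |f ω| ^ p / K ^ (p - 1) ∂P :=
        integral_mono_of_nonneg (ae_of_all _ fun _ => abs_nonneg _) (hfp.div_const _).integrableOn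
          ((ae_restrict_mem₀ hs).mono fun _ hω => le_rpow_div_rpow_sub_one hK hω hp)
    _ ≤ ∫ ω, |f ω| ^ p / K ^ (p - 1) ∂P :=
        setIntegral_le_integral (hfp.div_const _) (ae_of_all _ fun _ => by positivity)
    _ = (∫ ω, |f ω| ^ p ∂P) / K ^ (p - 1) := integral_div _ _

lemma exists_setIntegral_abs_ge_le {p : ℝ} (hp : 1 < p) (M : ℝ) {ε : ℝ} (hε : 0 < ε) :
    ∃ K : ℝ, ∀ f : α → ℝ, AEMeasurable f P → Integrable (fun ω => |f ω| ^ p) P →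
      ∫ ω, |f ω| ^ p ∂P ≤ M → ∫ ω in {ω | K ≤ |f ω|}, |f ω| ∂P ≤ ε := by
  set c := |M| / ε + 1
  have hc : 0 < c := by positivity
  refine ⟨c ^ (p - 1)⁻¹, fun f hf hfp hM => ?_⟩
  have hKc : (c ^ (p - 1)⁻¹) ^ (p - 1) = c := Real.rpow_inv_rpow hc.le (by linarith)
  calc ∫ ω in {ω | c ^ (p - 1)⁻¹ ≤ |f ω|}, |f ω| ∂P
      ≤ (∫ ω, |f ω| ^ p ∂P) / (c ^ (p - 1)⁻¹) ^ (p - 1) :=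
        setIntegral_abs_ge_le hp.le (by positivity) hf hfp
    _ ≤ M / c := by rw [hKc]; gcongr
    _ ≤ ε := by
        rw [div_le_iff₀ hc, mul_add, mul_div_cancel₀ _ hε.ne', mul_one]
        linarith [le_abs_self M]

end UniformIntegrability

theorem statement11_general {T : ℝ} {d : ℕ}
    {m0 : MeasurableSpace (PathSpace d)}
    (𝔓 : Set (@Measure (PathSpace d) m0))
    (hB : rawSA d T ≤ m0)
    (hN : MeasurableSpace.generateFrom {N | IsPolar 𝔓 N} ≤ m0)
    (p : ℝ) (hp : 1 < p)
    (X : PathSpace d → ℝ)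
    (hXp : (∀ P ∈ 𝔓, Integrable (fun ω => |X ω| ^ p) P) ∧
      ∃ M : ℝ, ∀ P ∈ 𝔓, ∫ ω, |X ω| ^ p ∂P ≤ M)
    (Y W : ℝ → PathSpace d → ℝ)
    -- `Y_σ` represents the conditional sublinear expectation of `X` at every stopping time,
    -- attained along an increasing sequence
    (hY : ∀ σ : PathSpace d → ℝ, ∀ hσ : IsStoppingTime (FhatFilt T d 𝔓 hB hN) (fun ω => (σ ω : WithTop ℝ)),
      (∀ ω, σ ω ∈ Set.Icc (0 : ℝ) T) → ∀ P ∈ 𝔓,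
      IsEssSupOf P (condExpFam 𝔓 hσ.measurableSpace P X) (fun ω => Y (σ ω) ω) ∧
      ∃ Pn : ℕ → @Measure (PathSpace d) m0,
        (∀ n, Pn n ∈ MSet 𝔓 hσ.measurableSpace P) ∧
        (∀ᵐ ω ∂P, Monotone fun n => condExp hσ.measurableSpace (Pn n) X ω) ∧
        (∀ᵐ ω ∂P, Tendsto (fun n => condExp hσ.measurableSpace (Pn n) X ω)
          atTop (nhds (Y (σ ω) ω))))
    -- likewise `W_σ` for the claim `|X|^p`
    (hW : ∀ σ : PathSpace d → ℝ, ∀ hσ : IsStoppingTime (FhatFilt T d 𝔓 hB hN) (fun ω => (σ ω : WithTop ℝ)),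
      (∀ ω, σ ω ∈ Set.Icc (0 : ℝ) T) → ∀ P ∈ 𝔓,
      IsEssSupOf P (condExpFam 𝔓 hσ.measurableSpace P (fun ω => |X ω| ^ p))
        (fun ω => W (σ ω) ω) ∧
      ∃ Pn : ℕ → @Measure (PathSpace d) m0,
        (∀ n, Pn n ∈ MSet 𝔓 hσ.measurableSpace P) ∧
        (∀ᵐ ω ∂P, Monotone fun n =>
          condExp hσ.measurableSpace (Pn n) (fun ω' => |X ω'| ^ p) ω) ∧
        (∀ᵐ ω ∂P, Tendsto (fun n =>
          condExp hσ.measurableSpace (Pn n) (fun ω' => |X ω'| ^ p) ω)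
          atTop (nhds (W (σ ω) ω)))) :
    -- the `p`-th moment bound for the stopped values
    (∀ σ : PathSpace d → ℝ, IsStoppingTime (FhatFilt T d 𝔓 hB hN) (fun ω => (σ ω : WithTop ℝ)) →
      (∀ ω, σ ω ∈ Set.Icc (0 : ℝ) T) → ∀ P ∈ 𝔓,
      Integrable (fun ω => |Y (σ ω) ω| ^ p) P ∧
      ∀ M : ℝ, (∀ P' ∈ 𝔓, ∫ ω, |X ω| ^ p ∂P' ≤ M) →
        ∫ ω, |Y (σ ω) ω| ^ p ∂P ≤ M) ∧
    -- in particular, `Y` is of class (D,`𝔓`): uniform integrability of the stopped values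
    (∀ P ∈ 𝔓, ∀ ε : ℝ, 0 < ε → ∃ K : ℝ,
      ∀ σ : PathSpace d → ℝ, IsStoppingTime (FhatFilt T d 𝔓 hB hN) (fun ω => (σ ω : WithTop ℝ)) →
      (∀ ω, σ ω ∈ Set.Icc (0 : ℝ) T) →
      ∫ ω in {ω | K ≤ |Y (σ ω) ω|}, |Y (σ ω) ω| ∂P ≤ ε) := by
  have moment : ∀ σ : PathSpace d → ℝ,
      IsStoppingTime (FhatFilt T d 𝔓 hB hN) (fun ω => (σ ω : WithTop ℝ)) →
      (∀ ω, σ ω ∈ Set.Icc (0 : ℝ) T) → ∀ P ∈ 𝔓,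
      AEMeasurable (fun ω => Y (σ ω) ω) P ∧ Integrable (fun ω => |Y (σ ω) ω| ^ p) P ∧
      ∀ M : ℝ, (∀ P' ∈ 𝔓, ∫ ω, |X ω| ^ p ∂P' ≤ M) → ∫ ω, |Y (σ ω) ω| ^ p ∂P ≤ M := by
    intro σ hσ hσT P hP
    obtain ⟨-, Pn, hPn, -, hYlim⟩ := hY σ hσ hσT P hP
    obtain ⟨hWsup, Qn, hQn, -, hWlim⟩ := hW σ hσ hσT P hP
    exact ⟨aemeasurable_of_tendsto_condExp hσ.measurableSpace_le hYlim,
      integrable_rpow_abs_and_integral_le_of_isEssSupOf hσ.measurableSpace_le hp.le hP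
        hXp.1 hXp.2 hWsup hPn hQn hYlim hWlim⟩
  refine ⟨fun σ hσ hσT P hP => (moment σ hσ hσT P hP).2, fun P hP ε hε => ?_⟩
  obtain ⟨M, hM⟩ := hXp.2
  obtain ⟨K, hK⟩ := exists_setIntegral_abs_ge_le (P := P) hp M hε
  refine ⟨K, fun σ hσ hσT => ?_⟩
  obtain ⟨hmeas, hint, hbound⟩ := moment σ hσ hσT P hP
  exact hK _ hmeas hint (hbound M hM)

/-- if `X` has a uniformly bounded `p`-th moment (`p > 1`), the
`E`-martingale is of class (D,`𝔓`): the stopped values have `p`-th moments bounded by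
`sup_{P'} E^{P'}[|X|^p]`, and they are uniformly integrable under every `P ∈ 𝔓`. -/
theorem statement11 {T : ℝ} (hT : 0 < T) {d : ℕ}
    {m0 : MeasurableSpace (PathSpace d)}
    (𝔓 : Set (@Measure (PathSpace d) m0)) (h𝔓 : 𝔓.Nonempty)
    (hprob : ∀ P ∈ 𝔓, IsProbabilityMeasure P)
    (hB : rawSA d T ≤ m0)
    (hN : MeasurableSpace.generateFrom {N | IsPolar 𝔓 N} ≤ m0)
    (p : ℝ) (hp : 1 < p)
    (X : PathSpace d → ℝ) (hXmeas : Measurable[rawSA d T] X)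
    (hXp : (∀ P ∈ 𝔓, Integrable (fun ω => |X ω| ^ p) P) ∧
      ∃ M : ℝ, ∀ P ∈ 𝔓, ∫ ω, |X ω| ^ p ∂P ≤ M)
    (Y W : ℝ → PathSpace d → ℝ)
    -- `Y_σ` represents the conditional sublinear expectation of `X` at every stopping time,
    -- attained along an increasing sequence
    (hY : ∀ σ : PathSpace d → ℝ, ∀ hσ : IsStoppingTime (FhatFilt T d 𝔓 hB hN) (fun ω => (σ ω : WithTop ℝ)),
      (∀ ω, σ ω ∈ Set.Icc (0 : ℝ) T) → ∀ P ∈ 𝔓,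
      IsEssSupOf P (condExpFam 𝔓 hσ.measurableSpace P X) (fun ω => Y (σ ω) ω) ∧
      ∃ Pn : ℕ → @Measure (PathSpace d) m0,
        (∀ n, Pn n ∈ MSet 𝔓 hσ.measurableSpace P) ∧
        (∀ᵐ ω ∂P, Monotone fun n => condExp hσ.measurableSpace (Pn n) X ω) ∧
        (∀ᵐ ω ∂P, Tendsto (fun n => condExp hσ.measurableSpace (Pn n) X ω)
          atTop (nhds (Y (σ ω) ω))))
    -- likewise `W_σ` for the claim `|X|^p`
    (hW : ∀ σ : PathSpace d → ℝ, ∀ hσ : IsStoppingTime (FhatFilt T d 𝔓 hB hN) (fun ω => (σ ω : WithTop ℝ)),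
      (∀ ω, σ ω ∈ Set.Icc (0 : ℝ) T) → ∀ P ∈ 𝔓,
      IsEssSupOf P (condExpFam 𝔓 hσ.measurableSpace P (fun ω => |X ω| ^ p))
        (fun ω => W (σ ω) ω) ∧
      ∃ Pn : ℕ → @Measure (PathSpace d) m0,
        (∀ n, Pn n ∈ MSet 𝔓 hσ.measurableSpace P) ∧
        (∀ᵐ ω ∂P, Monotone fun n =>
          condExp hσ.measurableSpace (Pn n) (fun ω' => |X ω'| ^ p) ω) ∧
        (∀ᵐ ω ∂P, Tendsto (fun n =>
          condExp hσ.measurableSpace (Pn n) (fun ω' => |X ω'| ^ p) ω)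
          atTop (nhds (W (σ ω) ω)))) :
    -- the `p`-th moment bound for the stopped values
    (∀ σ : PathSpace d → ℝ, IsStoppingTime (FhatFilt T d 𝔓 hB hN) (fun ω => (σ ω : WithTop ℝ)) →
      (∀ ω, σ ω ∈ Set.Icc (0 : ℝ) T) → ∀ P ∈ 𝔓,
      Integrable (fun ω => |Y (σ ω) ω| ^ p) P ∧
      ∀ M : ℝ, (∀ P' ∈ 𝔓, ∫ ω, |X ω| ^ p ∂P' ≤ M) →
        ∫ ω, |Y (σ ω) ω| ^ p ∂P ≤ M) ∧
    -- in particular, `Y` is of class (D,`𝔓`): uniform integrability of the stopped values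
    (∀ P ∈ 𝔓, ∀ ε : ℝ, 0 < ε → ∃ K : ℝ,
      ∀ σ : PathSpace d → ℝ, IsStoppingTime (FhatFilt T d 𝔓 hB hN) (fun ω => (σ ω : WithTop ℝ)) →
      (∀ ω, σ ω ∈ Set.Icc (0 : ℝ) T) →
      ∫ ω in {ω | K ≤ |Y (σ ω) ω|}, |Y (σ ω) ω| ∂P ≤ ε) :=
  statement11_general 𝔓 hB hN p hp X hXp Y W hY hW
end

section
/- Suppose E₀ : H → ℝ is (H_t)-locally strictly monotone. Let (E_t)_{t∈[0,T]} and (Ẽ_t)_{t∈[0,T]} be two families of maps E_t, Ẽ_t : H → L¹_𝒫 taking F°_t-measurable values such that: both families are (H_t)-positively homogeneous; E_t(H) ⊆ H_t and Ẽ_t(H) ⊆ H_t for all t; E₀(E_t(X)) = E₀(X) and E₀(Ẽ_t(X)) = E₀(X) for all t ∈ [0,T] and X ∈ H; and the time-0 maps of both families coincide with E₀. Then for every t ∈ [0,T] and every X ∈ H, E_t(X) = Ẽ_t(X) 𝒫-quasi-surely. (Uniqueness of positively homogeneous time-consistent dynamic extensions of E₀.) -/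
/-!
Fix `t` and `X`, and write `A = E_t X`, `B = Ẽ_t X`. Positive homogeneity and time consistency
give `E₀(A φ) = E₀(X φ) = E₀(B φ)` for every bounded `0 ≤ φ ∈ H_t`. If `{B < A}` were not polar,
the truncated gap `f = min((A - B)⁺, 1) ∈ H_t` would make `A f ≥ B f` with strict inequality on
a non-polar set, so local strict monotonicity yields `g ∈ H_t`, `0 ≤ g ≤ 1`, with
`E₀(B f g) < E₀(A f g)`, contradicting the identity above for `φ = f g`.
-/

open MeasureTheory Set Filter

namespace IsPolar

variable {α : Type*} {m0 : MeasurableSpace α} {𝔓 : Set (Measure α)} {s t : Set α}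

theorem mono (ht : IsPolar 𝔓 t) (hst : s ⊆ t) : IsPolar 𝔓 s :=
  fun P hP => measure_mono_null hst (ht P hP)

theorem union (hs : IsPolar 𝔓 s) (ht : IsPolar 𝔓 t) : IsPolar 𝔓 (s ∪ t) :=
  fun P hP => measure_union_null (hs P hP) (ht P hP)

theorem of_forall_not_mem (h : ∀ x, x ∉ s) : IsPolar 𝔓 s := by
  rw [eq_empty_iff_forall_notMem.2 h]
  exact fun P _ => measure_empty

end IsPolar

section TestSpace

variable {α : Type*}

structure IsTestSpace (S : Set (α → ℝ)) : Prop where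
  add_mem {f g} : f ∈ S → g ∈ S → f + g ∈ S
  smul_mem {f} : f ∈ S → ∀ c : ℝ, c • f ∈ S
  inf_mem {f g} : f ∈ S → g ∈ S → f ⊓ g ∈ S
  sup_mem {f g} : f ∈ S → g ∈ S → f ⊔ g ∈ S
  mul_mem {f g} : f ∈ S → g ∈ S → BddFun g → f * g ∈ S

theorem IsTestSpace.sub_mem {S : Set (α → ℝ)} (hS : IsTestSpace S) {f g : α → ℝ}
    (hf : f ∈ S) (hg : g ∈ S) : f - g ∈ S := by
  rw [sub_eq_add_neg, ← neg_one_smul ℝ g]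
  exact hS.add_mem hf (hS.smul_mem hg (-1))

theorem bddFun_of_mem_unitInterval {f : α → ℝ} (hf : ∀ x, f x ∈ unitInterval) : BddFun f :=
  ⟨1, fun x => abs_le.2 ⟨by linarith [(hf x).1], (hf x).2⟩⟩

/-- `min ((A - B)⁺, 1)`, written with the operations under which a test space is closed. -/
def truncGap (A B : α → ℝ) : α → ℝ := (A ⊔ B - B) ⊓ 1

variable {A B : α → ℝ}

theorem truncGap_apply (x : α) : truncGap A B x = min (max (A x) (B x) - B x) 1 := rfl

theorem IsTestSpace.truncGap_mem {S : Set (α → ℝ)} (hS : IsTestSpace S) (hone : 1 ∈ S)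
    (hA : A ∈ S) (hB : B ∈ S) : truncGap A B ∈ S :=
  hS.inf_mem (hS.sub_mem (hS.sup_mem hA hB) hB) hone

theorem truncGap_mem_unitInterval (x : α) : truncGap A B x ∈ unitInterval :=
  ⟨le_min (sub_nonneg.2 (le_max_right _ _)) zero_le_one, min_le_right _ _⟩

theorem truncGap_eq_zero_of_le {x : α} (h : A x ≤ B x) : truncGap A B x = 0 := by
  simp [truncGap_apply, max_eq_right h]

theorem truncGap_pos_of_lt {x : α} (h : B x < A x) : 0 < truncGap A B x := by
  rw [truncGap_apply, max_eq_left h.le]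
  exact lt_min (sub_pos.2 h) zero_lt_one

theorem mul_truncGap_le (x : α) : B x * truncGap A B x ≤ A x * truncGap A B x := by
  rcases le_or_gt (A x) (B x) with h | h
  · simp [truncGap_eq_zero_of_le h]
  · exact mul_le_mul_of_nonneg_right h.le (truncGap_mem_unitInterval x).1

theorem mul_truncGap_lt {x : α} (h : B x < A x) : B x * truncGap A B x < A x * truncGap A B x :=
  mul_lt_mul_of_pos_right h (truncGap_pos_of_lt h)

end TestSpace

section Uniqueness

variable {α : Type*} {m0 : MeasurableSpace α} (𝔓 : Set (Measure α))

def IsLocallyStrictlyMonotone (S : Set (α → ℝ)) (E₀ : (α → ℝ) → ℝ) : Prop :=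
  ∀ X ∈ S, ∀ Y ∈ S, IsPolar 𝔓 {x | X x < Y x} → (∃ P ∈ 𝔓, 0 < P {x | Y x < X x}) →
    ∃ f ∈ S, (∀ x, f x ∈ Icc (0 : ℝ) 1) ∧ E₀ (Y * f) < E₀ (X * f)

variable {𝔓} {S : Set (α → ℝ)} {E₀ : (α → ℝ) → ℝ}

theorem IsLocallyStrictlyMonotone.isPolar_lt (hE₀ : IsLocallyStrictlyMonotone 𝔓 S E₀)
    (hS : IsTestSpace S) (hone : 1 ∈ S) {A B : α → ℝ} (hA : A ∈ S) (hB : B ∈ S)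
    (hAB : ∀ φ ∈ S, BddFun φ → 0 ≤ φ → E₀ (A * φ) = E₀ (B * φ)) :
    IsPolar 𝔓 {x | B x < A x} := by
  by_contra hnot
  obtain ⟨P, hP, hPne⟩ : ∃ P ∈ 𝔓, P {x | B x < A x} ≠ 0 := by simpa [IsPolar] using hnot
  set f := truncGap A B
  have hf := hS.truncGap_mem hone hA hB
  have hfbdd := bddFun_of_mem_unitInterval (truncGap_mem_unitInterval (A := A) (B := B))
  have hpolar : IsPolar 𝔓 {x | (A * f) x < (B * f) x} :=
    IsPolar.of_forall_not_mem fun x hx => (mul_truncGap_le x).not_gt hx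
  have hcharged : ∃ P ∈ 𝔓, 0 < P {x | (B * f) x < (A * f) x} :=
    ⟨P, hP, (pos_iff_ne_zero.2 hPne).trans_le (measure_mono fun x hx => mul_truncGap_lt hx)⟩
  obtain ⟨g, hg, hg01, hlt⟩ :=
    hE₀ _ (hS.mul_mem hA hf hfbdd) _ (hS.mul_mem hB hf hfbdd) hpolar hcharged
  have hfg01 : ∀ x, (f * g) x ∈ unitInterval :=
    fun x => unitInterval.mul_mem (truncGap_mem_unitInterval x) (hg01 x)
  have heq := hAB (f * g) (hS.mul_mem hf hg (bddFun_of_mem_unitInterval hg01))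
    (bddFun_of_mem_unitInterval hfg01) fun x => (hfg01 x).1
  rw [mul_assoc, mul_assoc] at hlt
  exact hlt.ne heq.symm

theorem IsLocallyStrictlyMonotone.isPolar_ne (hE₀ : IsLocallyStrictlyMonotone 𝔓 S E₀)
    (hS : IsTestSpace S) (hone : 1 ∈ S) {A B : α → ℝ} (hA : A ∈ S) (hB : B ∈ S)
    (hAB : ∀ φ ∈ S, BddFun φ → 0 ≤ φ → E₀ (A * φ) = E₀ (B * φ)) :
    IsPolar 𝔓 {x | A x ≠ B x} :=
  ((hE₀.isPolar_lt hS hone hB hA fun φ hφ hb h0 => (hAB φ hφ hb h0).symm).union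
    (hE₀.isPolar_lt hS hone hA hB hAB)).mono fun _ hx => lt_or_gt_of_ne hx

theorem E₀_mul_eq_of_consistent {S HT : Set (α → ℝ)} (hST : S ⊆ HT) (hS : IsTestSpace S)
    (hHT : IsTestSpace HT) (hE₀qs : ∀ f ∈ HT, ∀ g ∈ HT, IsPolar 𝔓 {x | f x ≠ g x} → E₀ f = E₀ g)
    {F : (α → ℝ) → α → ℝ} (hFinv : ∀ X ∈ HT, F X ∈ S)
    (hFph : ∀ X ∈ HT, ∀ φ ∈ S, BddFun φ → 0 ≤ φ → IsPolar 𝔓 {x | F (X * φ) x ≠ F X x * φ x})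
    (hFcons : ∀ X ∈ HT, E₀ (F X) = E₀ X) {X φ : α → ℝ} (hX : X ∈ HT) (hφ : φ ∈ S)
    (hφbdd : BddFun φ) (hφ0 : 0 ≤ φ) : E₀ (F X * φ) = E₀ (X * φ) := by
  have hXφ : X * φ ∈ HT := hHT.mul_mem hX (hST hφ) hφbdd
  calc E₀ (F X * φ) = E₀ (F (X * φ)) :=
        (hE₀qs _ (hST (hFinv _ hXφ)) _ (hST (hS.mul_mem (hFinv X hX) hφ hφbdd))
          (hFph X hX φ hφ hφbdd hφ0)).symm
    _ = E₀ (X * φ) := hFcons _ hXφ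

end Uniqueness

theorem statement12_general {T : ℝ} {d : ℕ}
    (𝔓 : Set (@Measure (PathSpace d) (rawSA d T)))
    -- the chain of test-function spaces `(H_t)`
    (H : ℝ → Set (PathSpace d → ℝ))
    (hchain : ∀ s t : ℝ, 0 ≤ s → s ≤ t → t ≤ T → H s ⊆ H t)
    (hH0 : H 0 = {f | ∃ c : ℝ, f = fun _ => c})
    (hlin : ∀ t ∈ Set.Icc (0 : ℝ) T, ∀ f ∈ H t, ∀ g ∈ H t,
      f + g ∈ H t ∧ (∀ c : ℝ, c • f ∈ H t) ∧ f ⊓ g ∈ H t ∧ f ⊔ g ∈ H t ∧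
      (BddFun g → f * g ∈ H t))
    -- the static sublinear expectation `E₀`, as a map on (representatives of) `H = H_T`
    (E₀ : (PathSpace d → ℝ) → ℝ)
    (hE₀qs : ∀ f ∈ H T, ∀ g ∈ H T, IsPolar 𝔓 {ω | f ω ≠ g ω} → E₀ f = E₀ g)
    -- `(H_t)`-local strict monotonicity of `E₀`
    (hLSM : ∀ t ∈ Set.Icc (0 : ℝ) T, ∀ X ∈ H t, ∀ Y ∈ H t,
      IsPolar 𝔓 {ω | X ω < Y ω} → (∃ P ∈ 𝔓, 0 < P {ω | Y ω < X ω}) →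
      ∃ f ∈ H t, (∀ ω, f ω ∈ Set.Icc (0 : ℝ) 1) ∧ E₀ (Y * f) < E₀ (X * f))
    -- the two dynamic extensions
    (E Et : ℝ → (PathSpace d → ℝ) → (PathSpace d → ℝ))
    -- `(H_t)`-positive homogeneity
    (hEph : ∀ t ∈ Set.Icc (0 : ℝ) T, ∀ X ∈ H T, ∀ φ ∈ H t, BddFun φ → 0 ≤ φ →
      IsPolar 𝔓 {ω | E t (X * φ) ω ≠ E t X ω * φ ω})
    (hEtph : ∀ t ∈ Set.Icc (0 : ℝ) T, ∀ X ∈ H T, ∀ φ ∈ H t, BddFun φ → 0 ≤ φ →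
      IsPolar 𝔓 {ω | Et t (X * φ) ω ≠ Et t X ω * φ ω})
    -- invariance: `E_t(H) ⊆ H_t`
    (hEinv : ∀ t ∈ Set.Icc (0 : ℝ) T, ∀ X ∈ H T, E t X ∈ H t)
    (hEtinv : ∀ t ∈ Set.Icc (0 : ℝ) T, ∀ X ∈ H T, Et t X ∈ H t)
    -- time consistency with `E₀`: `E₀ ∘ E_t = E₀`
    (hEcons : ∀ t ∈ Set.Icc (0 : ℝ) T, ∀ X ∈ H T, E₀ (E t X) = E₀ X)
    (hEtcons : ∀ t ∈ Set.Icc (0 : ℝ) T, ∀ X ∈ H T, E₀ (Et t X) = E₀ X) :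
    -- conclusion: the two extensions coincide quasi-surely
    ∀ t ∈ Set.Icc (0 : ℝ) T, ∀ X ∈ H T, IsPolar 𝔓 {ω | E t X ω ≠ Et t X ω} := by
  have hTest : ∀ t ∈ Icc (0 : ℝ) T, IsTestSpace (H t) := fun t ht =>
    ⟨fun hf hg => (hlin t ht _ hf _ hg).1, fun hf => (hlin t ht _ hf _ hf).2.1,
      fun hf hg => (hlin t ht _ hf _ hg).2.2.1, fun hf hg => (hlin t ht _ hf _ hg).2.2.2.1,
      fun hf hg => (hlin t ht _ hf _ hg).2.2.2.2⟩
  intro t ht X hX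
  have hTT : T ∈ Icc (0 : ℝ) T := ⟨ht.1.trans ht.2, le_rfl⟩
  have hST : H t ⊆ H T := hchain t T ht.1 ht.2 le_rfl
  have hone : (1 : PathSpace d → ℝ) ∈ H t := hchain 0 t le_rfl ht.1 ht.2 (hH0 ▸ ⟨1, rfl⟩)
  have hLSMt : IsLocallyStrictlyMonotone 𝔓 (H t) E₀ := hLSM t ht
  refine hLSMt.isPolar_ne (hTest t ht) hone (hEinv t ht X hX) (hEtinv t ht X hX) ?_
  intro φ hφ hφbdd hφ0
  rw [E₀_mul_eq_of_consistent hST (hTest t ht) (hTest T hTT) hE₀qs (hEinv t ht) (hEph t ht)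
      (hEcons t ht) hX hφ hφbdd hφ0,
    E₀_mul_eq_of_consistent hST (hTest t ht) (hTest T hTT) hE₀qs (hEtinv t ht) (hEtph t ht)
      (hEtcons t ht) hX hφ hφbdd hφ0]

/-- uniqueness of positively homogeneous, time-consistent dynamic
extensions of a locally strictly monotone sublinear expectation `E₀`. -/
theorem statement12 {T : ℝ} (hT : 0 < T) {d : ℕ}
    (𝔓 : Set (@Measure (PathSpace d) (rawSA d T))) (h𝔓 : 𝔓.Nonempty)
    (hprob : ∀ P ∈ 𝔓, IsProbabilityMeasure P)
    -- the chain of test-function spaces `(H_t)`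
    (H : ℝ → Set (PathSpace d → ℝ))
    (hchain : ∀ s t : ℝ, 0 ≤ s → s ≤ t → t ≤ T → H s ⊆ H t)
    (hH0 : H 0 = {f | ∃ c : ℝ, f = fun _ => c})
    (hlin : ∀ t ∈ Set.Icc (0 : ℝ) T, ∀ f ∈ H t, ∀ g ∈ H t,
      f + g ∈ H t ∧ (∀ c : ℝ, c • f ∈ H t) ∧ f ⊓ g ∈ H t ∧ f ⊔ g ∈ H t ∧
      (BddFun g → f * g ∈ H t))
    (hHL1 : ∀ f ∈ H T, MemL1 (rawSA d T) 𝔓 f)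
    -- the static sublinear expectation `E₀`, as a map on (representatives of) `H = H_T`
    (E₀ : (PathSpace d → ℝ) → ℝ)
    (hE₀qs : ∀ f ∈ H T, ∀ g ∈ H T, IsPolar 𝔓 {ω | f ω ≠ g ω} → E₀ f = E₀ g)
    -- `(H_t)`-local strict monotonicity of `E₀`
    (hLSM : ∀ t ∈ Set.Icc (0 : ℝ) T, ∀ X ∈ H t, ∀ Y ∈ H t,
      IsPolar 𝔓 {ω | X ω < Y ω} → (∃ P ∈ 𝔓, 0 < P {ω | Y ω < X ω}) →
      ∃ f ∈ H t, (∀ ω, f ω ∈ Set.Icc (0 : ℝ) 1) ∧ E₀ (Y * f) < E₀ (X * f))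
    -- the two dynamic extensions
    (E Et : ℝ → (PathSpace d → ℝ) → (PathSpace d → ℝ))
    -- values: `F°_t`-measurable elements of `L¹_𝔓`
    (hEval : ∀ t ∈ Set.Icc (0 : ℝ) T, ∀ X ∈ H T,
      Measurable[rawSA d t] (E t X) ∧ MemL1 (rawSA d T) 𝔓 (E t X))
    (hEtval : ∀ t ∈ Set.Icc (0 : ℝ) T, ∀ X ∈ H T,
      Measurable[rawSA d t] (Et t X) ∧ MemL1 (rawSA d T) 𝔓 (Et t X))
    -- `(H_t)`-positive homogeneity
    (hEph : ∀ t ∈ Set.Icc (0 : ℝ) T, ∀ X ∈ H T, ∀ φ ∈ H t, BddFun φ → 0 ≤ φ →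
      IsPolar 𝔓 {ω | E t (X * φ) ω ≠ E t X ω * φ ω})
    (hEtph : ∀ t ∈ Set.Icc (0 : ℝ) T, ∀ X ∈ H T, ∀ φ ∈ H t, BddFun φ → 0 ≤ φ →
      IsPolar 𝔓 {ω | Et t (X * φ) ω ≠ Et t X ω * φ ω})
    -- invariance: `E_t(H) ⊆ H_t`
    (hEinv : ∀ t ∈ Set.Icc (0 : ℝ) T, ∀ X ∈ H T, E t X ∈ H t)
    (hEtinv : ∀ t ∈ Set.Icc (0 : ℝ) T, ∀ X ∈ H T, Et t X ∈ H t)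
    -- time consistency with `E₀`: `E₀ ∘ E_t = E₀`
    (hEcons : ∀ t ∈ Set.Icc (0 : ℝ) T, ∀ X ∈ H T, E₀ (E t X) = E₀ X)
    (hEtcons : ∀ t ∈ Set.Icc (0 : ℝ) T, ∀ X ∈ H T, E₀ (Et t X) = E₀ X)
    -- the time-0 maps coincide with `E₀`
    (hE0 : ∀ X ∈ H T, E 0 X = fun _ => E₀ X)
    (hEt0 : ∀ X ∈ H T, Et 0 X = fun _ => E₀ X) :
    -- conclusion: the two extensions coincide quasi-surely
    ∀ t ∈ Set.Icc (0 : ℝ) T, ∀ X ∈ H T, IsPolar 𝔓 {ω | E t X ω ≠ Et t X ω} :=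
  statement12_general 𝔓 H hchain hH0 hlin E₀ hE₀qs hLSM E Et hEph hEtph hEinv hEtinv hEcons hEtcons
end

section
/- Suppose Assumption A holds for X and every P ∈ 𝒫 satisfies the augmentation hypothesis. Let Y be the càdlàg E-martingale of X. Then for every t ∈ [0,T] and every P ∈ 𝒫, Y_t ≤ E°_t(X) P-a.s. (the càdlàg E-martingale never exceeds the raw conditional sublinear expectation). -/
open MeasureTheory Set Filter

/-! Under the augmentation hypothesis every set of `F̂_t` is, up to a `Q`-null set, a set of
`F°_t`, so `E^Q[X | F̂_t] = E^Q[X | F°_t]` `Q`-a.s., and this equality transfers to `P` because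
both sides are `F̂_t`-measurable and `Q = P` on `F̂_t`. Hence every member of the family whose
essential supremum is `Y_t` is dominated by a member of the family whose essential supremum
is `E°_t(X)`. -/

section General

variable {α : Type*} {m m' m0 : MeasurableSpace α}

lemma EqOnSA.mono {P Q : Measure α} (h : EqOnSA m' Q P) (hmm' : m ≤ m') : EqOnSA m Q P :=
  fun A hA => h A (hmm' A hA)

lemma MSet_mono {𝔓 : Set (Measure α)} (hmm' : m ≤ m') (P : Measure α) :
    MSet 𝔓 m' P ⊆ MSet 𝔓 m P :=
  fun _ ⟨hQ, hQP⟩ => ⟨hQ, hQP.mono hmm'⟩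

lemma EqOnSA.ae_eq_of_measurable {P Q : Measure α} (hQP : EqOnSA m Q P) {f g : α → ℝ}
    (hf : Measurable[m] f) (hg : Measurable[m] g) (hfg : f =ᵐ[Q] g) : f =ᵐ[P] g := by
  have hdiff : MeasurableSet[m] {x | f x ≠ g x} := (measurableSet_eq_fun hf hg).compl
  change P {x | f x ≠ g x} = 0
  rw [← hQP _ hdiff]
  exact hfg

lemma IsEssSupOf.ae_le_of_forall_exists_ae_le {P : Measure α} {F G : Set (α → ℝ)}
    {Y Z : α → ℝ} (hY : IsEssSupOf P F Y) (hZ : IsEssSupOf P G Z)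
    (hFG : ∀ f ∈ F, ∃ g ∈ G, f ≤ᵐ[P] g) : Y ≤ᵐ[P] Z :=
  hY.2 Z fun f hf =>
    let ⟨g, hg, hfg⟩ := hFG f hf
    hfg.trans (hZ.1 g hg)

lemma condExp_ae_eq_condExp_of_forall_ae_eq_measurableSet {μ : Measure α} (hmm' : m ≤ m')
    (hm' : m' ≤ m0) [SigmaFinite (μ.trim (hmm'.trans hm'))] [SigmaFinite (μ.trim hm')] {f : α → ℝ} (hf : Integrable f μ)
    (hsets : ∀ A, MeasurableSet[m'] A → ∃ A', MeasurableSet[m] A' ∧ A =ᵐ[μ] A') :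
    μ[f|m] =ᵐ[μ] μ[f|m'] := by
  refine ae_eq_condExp_of_forall_setIntegral_eq hm' hf
    (fun _ _ _ => integrable_condExp.integrableOn) (fun A hA _ => ?_)
    (stronglyMeasurable_condExp.mono hmm').aestronglyMeasurable
  obtain ⟨A', hA', hAA'⟩ := hsets A hA
  calc ∫ x in A, (μ[f|m]) x ∂μ = ∫ x in A', (μ[f|m]) x ∂μ := setIntegral_congr_set hAA'
    _ = ∫ x in A', f x ∂μ := setIntegral_condExp (hmm'.trans hm') hf hA'
    _ = ∫ x in A, f x ∂μ := (setIntegral_congr_set hAA').symm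

end General

section PathSpace

variable {T : ℝ} {d : ℕ} {m0 : MeasurableSpace (PathSpace d)}

lemma rawSA_le_FhatSA (𝔓 : Set (Measure (PathSpace d))) {t : ℝ} (ht : t ≤ T) :
    rawSA d t ≤ FhatSA T d 𝔓 t :=
  le_sup_of_le_left <| le_iInf₂ fun _ hs => rawSA_mono (le_min (le_of_lt hs) ht)

lemma FhatSA_le {𝔓 : Set (Measure (PathSpace d))} (hB : rawSA d T ≤ m0)
    (hN : MeasurableSpace.generateFrom {N | IsPolar 𝔓 N} ≤ m0) (t : ℝ) : FhatSA T d 𝔓 t ≤ m0 :=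
  (FhatFilt T d 𝔓 hB hN).le t

lemma condExp_FhatSA_ae_eq_condExp_rawSA {𝔓 : Set (Measure (PathSpace d))}
    (hB : rawSA d T ≤ m0) (hN : MeasurableSpace.generateFrom {N | IsPolar 𝔓 N} ≤ m0)
    {t : ℝ} (ht : t ∈ Set.Icc (0 : ℝ) T) {P Q : Measure (PathSpace d)}
    [IsFiniteMeasure Q] (hQP : EqOnSA (FhatSA T d 𝔓 t) Q P) (hQ : AugHyp T d 𝔓 Q)
    {X : PathSpace d → ℝ} (hX : Integrable X Q) :
    Q[X|FhatSA T d 𝔓 t] =ᵐ[P] Q[X|rawSA d t] := by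
  have hsub := rawSA_le_FhatSA 𝔓 ht.2
  have hQeq : Q[X|rawSA d t] =ᵐ[Q] Q[X|FhatSA T d 𝔓 t] :=
    condExp_ae_eq_condExp_of_forall_ae_eq_measurableSet hsub (FhatSA_le hB hN t) hX
      fun A hA =>
        let ⟨A', hA', hnull⟩ := hQ t ht A hA
        ⟨A', hA', measure_symmDiff_eq_zero_iff.mp hnull⟩
  exact (hQP.ae_eq_of_measurable stronglyMeasurable_condExp.measurable
    (stronglyMeasurable_condExp.mono hsub).measurable hQeq.symm)

end PathSpace

theorem statement18_general {T : ℝ} {d : ℕ}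
    {m0 : MeasurableSpace (PathSpace d)}
    (𝔓 : Set (@Measure (PathSpace d) m0))
    (hprob : ∀ P ∈ 𝔓, IsProbabilityMeasure P)
    (hB : rawSA d T ≤ m0)
    (hN : MeasurableSpace.generateFrom {N | IsPolar 𝔓 N} ≤ m0)
    -- Assumption A
    (X : PathSpace d → ℝ) (hX : MemL1 (rawSA d T) 𝔓 X)
    (Eo : ℝ → PathSpace d → ℝ)
    (hEoess : ∀ t ∈ Set.Icc (0 : ℝ) T, ∀ P ∈ 𝔓,
      IsEssSupOf P (condExpFam 𝔓 (rawSA d t) P X) (Eo t))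
    -- augmentation hypothesis
    (hAug : ∀ P ∈ 𝔓, AugHyp T d 𝔓 P)
    -- `Y` : the càdlàg `E`-martingale of `X`
    (Y : ℝ → PathSpace d → ℝ)
    (hYess : ∀ t ∈ Set.Icc (0 : ℝ) T, ∀ P ∈ 𝔓,
      IsEssSupOf P (condExpFam 𝔓 (FhatSA T d 𝔓 t) P X) (Y t)) :
    ∀ t ∈ Set.Icc (0 : ℝ) T, ∀ P ∈ 𝔓, Y t ≤ᵐ[P] Eo t := by
  intro t ht P hP
  refine (hYess t ht P hP).ae_le_of_forall_exists_ae_le (hEoess t ht P hP) ?_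
  rintro _ ⟨Q, hQ, rfl⟩
  have : IsProbabilityMeasure Q := hprob Q hQ.1
  refine ⟨Q[X|rawSA d t], ⟨Q, MSet_mono (rawSA_le_FhatSA 𝔓 ht.2) P hQ, rfl⟩, ?_⟩
  exact (condExp_FhatSA_ae_eq_condExp_rawSA hB hN ht hQ.2 (hAug Q hQ.1) (hX.2.1 Q hQ.1)).le

/-- the càdlàg `E`-martingale never exceeds the raw conditional sublinear
expectation: `Y_t ≤ Eo_t(X)` `P`-a.s. for every `t ∈ [0,T]` and `P ∈ 𝔓`. -/
theorem statement18 {T : ℝ} (hT : 0 < T) {d : ℕ}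
    {m0 : MeasurableSpace (PathSpace d)}
    (𝔓 : Set (@Measure (PathSpace d) m0)) (h𝔓 : 𝔓.Nonempty)
    (hprob : ∀ P ∈ 𝔓, IsProbabilityMeasure P)
    (hB : rawSA d T ≤ m0)
    (hN : MeasurableSpace.generateFrom {N | IsPolar 𝔓 N} ≤ m0)
    -- Assumption A
    (X : PathSpace d → ℝ) (hX : MemL1 (rawSA d T) 𝔓 X)
    (hstable : StableUnderPastingE T d 𝔓)
    (Eo : ℝ → PathSpace d → ℝ)
    (hEomeas : ∀ t ∈ Set.Icc (0 : ℝ) T, Measurable[rawSA d t] (Eo t))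
    (hEoess : ∀ t ∈ Set.Icc (0 : ℝ) T, ∀ P ∈ 𝔓,
      IsEssSupOf P (condExpFam 𝔓 (rawSA d t) P X) (Eo t))
    -- augmentation hypothesis
    (hAug : ∀ P ∈ 𝔓, AugHyp T d 𝔓 P)
    -- `Y` : the càdlàg `E`-martingale of `X`
    (Y : ℝ → PathSpace d → ℝ)
    (hYpath : ∀ ω, IsCadlagPath T (fun t => Y t ω))
    (hYadp : ∀ t ∈ Set.Icc (0 : ℝ) T, Measurable[FhatSA T d 𝔓 t] (Y t))
    (hYess : ∀ t ∈ Set.Icc (0 : ℝ) T, ∀ P ∈ 𝔓,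
      IsEssSupOf P (condExpFam 𝔓 (FhatSA T d 𝔓 t) P X) (Y t)) :
    ∀ t ∈ Set.Icc (0 : ℝ) T, ∀ P ∈ 𝔓, Y t ≤ᵐ[P] Eo t :=
  statement18_general 𝔓 hprob hB hN X hX Eo hEoess hAug Y hYess
end
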